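/- arXiv:1508.01348 — 4 statements merged into one kernel-verified Lean document; each statement's English description precedes it below -/
import Mathlib

section
/- For every integer n ≥ 3, the exponent of the Weyl group W(Bₙ) = (Fin n → ZMod 2) ⋊ Sₙ equals twice the exponent of the symmetric group Sₙ. -/
open Multiplicative

abbrev Vn (n : ℕ) := Multiplicative (Fin n → ZMod 2)

def permAut (n : ℕ) : Equiv.Perm (Fin n) →* MulAut (Vn n) where
  toFun σ :=
    { toFun := fun v => ofAdd fun i => toAdd v (σ⁻¹ i)
      invFun := fun v => ofAdd fun i => toAdd v (σ i)
      left_inv := fun v => by simp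
      right_inv := fun v => by simp
      map_mul' := fun v w => rfl }
  map_one' := rfl
  map_mul' := fun σ τ => rfl

@[simp] lemma permAut_apply (n : ℕ) (σ : Equiv.Perm (Fin n)) (v : Vn n) (i : Fin n) :
    toAdd (permAut n σ v) i = toAdd v (σ⁻¹ i) := rfl

def Ve (n : ℕ) : Subgroup (Vn n) where
  carrier := {v | ∑ i, toAdd v i = 0}
  one_mem' := by simp
  mul_mem' := by
    intro a b ha hb
    simp only [Set.mem_setOf_eq, toAdd_mul, Pi.add_apply, Finset.sum_add_distrib] at *
    rw [ha, hb, add_zero]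
  inv_mem' := by
    intro a ha
    simp only [Set.mem_setOf_eq, toAdd_inv, Pi.neg_apply, Finset.sum_neg_distrib] at *
    rw [ha, neg_zero]

lemma permAut_mem_Ve {n : ℕ} (σ : Equiv.Perm (Fin n)) {v : Vn n} (hv : v ∈ Ve n) :
    permAut n σ v ∈ Ve n := by
  have h : ∑ i, toAdd v (σ⁻¹ i) = ∑ i, toAdd v i := Equiv.sum_comp σ⁻¹ (toAdd v)
  show ∑ i, toAdd (permAut n σ v) i = 0
  rw [show ∑ i, toAdd (permAut n σ v) i = ∑ i, toAdd v (σ⁻¹ i) from rfl, h]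
  exact hv

def permAutVe (n : ℕ) : Equiv.Perm (Fin n) →* MulAut (Ve n) where
  toFun σ :=
    { toFun := fun v => ⟨permAut n σ (v : Vn n), permAut_mem_Ve σ v.2⟩
      invFun := fun v => ⟨permAut n σ⁻¹ (v : Vn n), permAut_mem_Ve σ⁻¹ v.2⟩
      left_inv := fun v => Subtype.ext <| Multiplicative.toAdd.injective <| funext fun i => by simp
      right_inv := fun v => Subtype.ext <| Multiplicative.toAdd.injective <| funext fun i => by simp
      map_mul' := fun v w => Subtype.ext (map_mul (permAut n σ) (v : Vn n) (w : Vn n)) }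
  map_one' := rfl
  map_mul' := fun σ τ => rfl

/-- The Weyl group of `Bₙ` (equivalently `Cₙ`). -/
abbrev WB (n : ℕ) := Vn n ⋊[permAut n] Equiv.Perm (Fin n)

/-- The Weyl group of `Dₙ`. -/
abbrev WD (n : ℕ) := Ve n ⋊[permAutVe n] Equiv.Perm (Fin n)

/-!
Projecting to `Sₙ` shows `exp Sₙ ∣ exp W(Bₙ)`, and since `V` has exponent `2` and `g ^ exp Sₙ`
lies in `V`, also `exp W(Bₙ) ∣ 2 · exp Sₙ`. To rule out equality with `exp Sₙ`, take `σ ∈ Sₙ`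
of order `2ᵃ`, where `2ᵃ` is the full power of `2` in `exp Sₙ` (`a ≥ 1` because of the
transpositions). Some point `i` has an orbit of length `2ᵃ`, and then `(eᵢ, σ) ^ 2ᵃ` has
`i`-th coordinate `1`, so `(eᵢ, σ)` has order `2ᵃ⁺¹`, which does not divide `exp Sₙ`.
-/

open Finset MulAction

lemma Nat.eq_prime_mul_of_dvd_of_dvd_prime_mul {p m e : ℕ} (hp : p.Prime) (hme : m ∣ e)
    (hem : e ∣ p * m) (hne : e ≠ m) : e = p * m := by
  obtain ⟨c, rfl⟩ := hme
  rcases Nat.eq_zero_or_pos m with rfl | hm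
  · simp at hne
  have hc : c ∣ p := Nat.dvd_of_mul_dvd_mul_left hm (by rwa [mul_comm p] at hem)
  rcases (Nat.dvd_prime hp).1 hc with rfl | rfl
  · exact absurd (mul_one m) hne
  · exact mul_comm m c

lemma MulAction.exists_period_eq_of_orderOf_eq_prime_pow {M α : Type*} [Monoid M]
    [MulAction M α] [FaithfulSMul M α] {p k : ℕ} (hp : p.Prime) {g : M}
    (hg : orderOf g = p ^ (k + 1)) : ∃ a : α, period g a = p ^ (k + 1) := by
  have hpow : g ^ p ^ k ≠ 1 := pow_ne_one_of_lt_orderOf (pow_ne_zero _ hp.ne_zero)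
    (hg ▸ Nat.pow_lt_pow_right hp.one_lt k.lt_succ_self)
  obtain ⟨a, ha⟩ : ∃ a : α, g ^ p ^ k • a ≠ a := by
    by_contra! h
    exact hpow (FaithfulSMul.eq_of_smul_eq_smul fun a => by rw [h, one_smul])
  exact ⟨a, Nat.eq_prime_pow_of_dvd_least_prime_pow hp (mt pow_smul_eq_iff_period_dvd.2 ha)
    (hg ▸ period_dvd_orderOf g a)⟩

lemma Equiv.Perm.two_dvd_exponent {α : Type*} [Finite α] [Nontrivial α] :
    2 ∣ Monoid.exponent (Equiv.Perm α) := by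
  classical
  obtain ⟨x, y, hxy⟩ := exists_pair_ne α
  exact IsSwap.orderOf ⟨x, y, hxy, rfl⟩ ▸ Monoid.order_dvd_exponent _

namespace SemidirectProduct

variable {N G : Type*} [Group N] [Group G] {φ : G →* MulAut N}

lemma pow_right (x : N ⋊[φ] G) (k : ℕ) : (x ^ k).right = x.right ^ k :=
  map_pow rightHom x k

lemma mk_pow_left {N : Type*} [CommGroup N] {φ : G →* MulAut N} (n : N) (g : G) (k : ℕ) :
    ((⟨n, g⟩ : N ⋊[φ] G) ^ k).left = ∏ j ∈ range k, φ (g ^ j) n := by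
  induction k with
  | zero => rfl
  | succ k ih => rw [pow_succ, mul_left, ih, pow_right, prod_range_succ]

lemma orderOf_dvd_exponent_mul_orderOf_right (x : N ⋊[φ] G) :
    orderOf x ∣ Monoid.exponent N * orderOf x.right := by
  refine orderOf_dvd_of_pow_eq_one ?_
  have hx : x ^ orderOf x.right = inl (x ^ orderOf x.right).left := by
    ext
    · rfl
    · rw [right_inl, pow_right, pow_orderOf_eq_one]
  rw [mul_comm, pow_mul, hx, ← map_pow, Monoid.pow_exponent_eq_one, map_one]

lemma exponent_dvd_exponent_mul_exponent :
    Monoid.exponent (N ⋊[φ] G) ∣ Monoid.exponent N * Monoid.exponent G :=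
  Monoid.exponent_dvd.2 fun x => (orderOf_dvd_exponent_mul_orderOf_right x).trans
    (mul_dvd_mul_left _ (Monoid.order_dvd_exponent _))

lemma exponent_right_dvd : Monoid.exponent G ∣ Monoid.exponent (N ⋊[φ] G) :=
  Monoid.exponent_dvd_of_monoidHom inr inr_injective

end SemidirectProduct

lemma Vn.exponent_dvd_two {n : ℕ} : Monoid.exponent (Vn n) ∣ 2 :=
  Monoid.exponent_dvd_of_forall_pow_eq_one fun v => by
    rw [pow_two]
    exact toAdd.injective <| funext fun _ => CharTwo.add_self_eq_zero _

namespace WB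

open SemidirectProduct

variable {n : ℕ}

lemma exponent_dvd : Monoid.exponent (WB n) ∣ 2 * Monoid.exponent (Equiv.Perm (Fin n)) :=
  exponent_dvd_exponent_mul_exponent.trans (mul_dvd_mul_right Vn.exponent_dvd_two _)

lemma mk_pow_left_apply (v : Vn n) (σ : Equiv.Perm (Fin n)) (k : ℕ) (i : Fin n) :
    toAdd ((⟨v, σ⟩ : WB n) ^ k).left i = ∑ j ∈ range k, toAdd v ((σ ^ j)⁻¹ i) := by
  rw [mk_pow_left, toAdd_prod, Finset.sum_apply]
  rfl

lemma mk_single_pow_period_left_apply (σ : Equiv.Perm (Fin n)) (i : Fin n) :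
    toAdd ((⟨ofAdd (Pi.single i 1), σ⟩ : WB n) ^ period σ i).left i = 1 := by
  have hpos : 0 < period σ i := period_pos_of_orderOf_pos (orderOf_pos σ) i
  rw [mk_pow_left_apply, sum_eq_single_of_mem 0 (mem_range.2 hpos)]
  · simp
  · intro j hj hj0
    refine Pi.single_eq_of_ne (fun hfix => hj0 ?_) _
    have hdvd : period σ i ∣ j :=
      pow_smul_eq_iff_period_dvd.1 (Equiv.Perm.inv_eq_iff_eq.1 hfix).symm
    exact Nat.eq_zero_of_dvd_of_lt hdvd (mem_range.1 hj)

lemma orderOf_mk_single {σ : Equiv.Perm (Fin n)} {i : Fin n} (hi : period σ i = orderOf σ) :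
    orderOf (⟨ofAdd (Pi.single i 1), σ⟩ : WB n) = 2 * orderOf σ := by
  set g : WB n := ⟨ofAdd (Pi.single i 1), σ⟩
  refine Nat.eq_prime_mul_of_dvd_of_dvd_prime_mul Nat.prime_two (orderOf_map_dvd rightHom g)
    ((orderOf_dvd_exponent_mul_orderOf_right g).trans (mul_dvd_mul_right Vn.exponent_dvd_two _))
    fun h => ?_
  have hleft := mk_single_pow_period_left_apply σ i
  rw [hi, ← h, pow_orderOf_eq_one] at hleft
  exact one_ne_zero hleft.symm

end WB

/-- For every integer `n ≥ 3`, the exponent of the Weyl group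
`W(Bₙ) = (Fin n → ZMod 2) ⋊ Sₙ` equals twice the exponent of the symmetric group `Sₙ`. -/
theorem exponent_weylB (n : ℕ) (hn : 3 ≤ n) :
    Monoid.exponent (WB n) = 2 * Monoid.exponent (Equiv.Perm (Fin n)) := by
  set m := Monoid.exponent (Equiv.Perm (Fin n))
  have hm : m ≠ 0 := Monoid.exponent_ne_zero_of_finite
  have : Nontrivial (Fin n) := Fin.nontrivial_iff_two_le.2 (by omega)
  obtain ⟨k, hk⟩ : ∃ k, m.factorization 2 = k + 1 := Nat.exists_eq_add_one.2
    (Nat.prime_two.factorization_pos_of_dvd hm Equiv.Perm.two_dvd_exponent)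
  obtain ⟨σ, hσ⟩ := Nat.prime_two.exists_orderOf_eq_pow_factorization_exponent (Equiv.Perm (Fin n))
  rw [hk] at hσ
  obtain ⟨i, hi⟩ := exists_period_eq_of_orderOf_eq_prime_pow (α := Fin n) Nat.prime_two hσ
  have hg := WB.orderOf_mk_single (hi.trans hσ.symm)
  refine Nat.eq_prime_mul_of_dvd_of_dvd_prime_mul Nat.prime_two
    SemidirectProduct.exponent_right_dvd WB.exponent_dvd fun h => ?_
  have hdvd : 2 ^ (m.factorization 2 + 1) ∣ m := by
    rw [hk, ← h, pow_succ', ← hσ, ← hg]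
    exact Monoid.order_dvd_exponent _
  exact Nat.pow_succ_factorization_not_dvd hm Nat.prime_two hdvd
end

section
/- Let n ≥ 3 and let H be a subgroup of Sₙ containing the alternating group Aₙ. If W is an H-invariant additive subgroup of V = (Fin n → ZMod 2) (for the coordinate-permutation action) with W ≠ 0 and W ≠ V, then W equals Δ (the subgroup of constant vectors) or W equals Vₑ (the subgroup of vectors with coordinate sum zero). -/
/-- The subgroup `Δ` of constant vectors in `V = (Fin n → ZMod 2)`. -/
def DeltaAdd (n : ℕ) : AddSubgroup (Fin n → ZMod 2) where
  carrier := {v | ∀ i j, v i = v j}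
  zero_mem' := fun _ _ => rfl
  add_mem' := fun {a b} ha hb i j => by
    simp only [Pi.add_apply]; rw [ha i j, hb i j]
  neg_mem' := fun {a} ha i j => by
    simp only [Pi.neg_apply]; rw [ha i j]

/-- The even subgroup `Vₑ` of vectors with coordinate sum zero in `V = (Fin n → ZMod 2)`. -/
def VeAdd (n : ℕ) : AddSubgroup (Fin n → ZMod 2) where
  carrier := {v | ∑ i, v i = 0}
  zero_mem' := by simp
  add_mem' := by
    intro a b ha hb
    simp only [Set.mem_setOf_eq, Pi.add_apply, Finset.sum_add_distrib] at *
    rw [ha, hb, add_zero]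
  neg_mem' := by
    intro a ha
    simp only [Set.mem_setOf_eq, Pi.neg_apply, Finset.sum_neg_distrib] at *
    rw [ha, neg_zero]

/-!
If `W ≤ Δ = {0, 1}`, then `W = Δ`. Otherwise some `v ∈ W` has `v i ≠ v j`; for a third
index `k`, `v` plus its translate by a 3-cycle on `i, j, k` is a weight-two vector `e_a + e_b`.
Since `Aₙ` is transitive on unordered pairs, `W` contains every `e_c + e_d`; these span `Vₑ`,
which has index two in `V`, so `W ≠ V` forces `W = Vₑ`.
-/

open Equiv

lemma ZMod.add_eq_one_of_ne_mod_two {x y : ZMod 2} (h : x ≠ y) : x + y = 1 := by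
  decide +revert

section Action

variable {α : Type*} [DecidableEq α]

lemma single_add_single_comp_perm_inv {M : Type*} [AddZeroClass M] (σ : Perm α) (a b : α)
    (m : M) :
    (fun i => (Pi.single a m + Pi.single b m : α → M) (σ⁻¹ i)) =
      Pi.single (σ a) m + Pi.single (σ b) m := by
  funext i
  simp only [Pi.add_apply, Pi.single_apply, Perm.inv_eq_iff_eq]

lemma exists_perm_apply_eq_and_apply_eq {a b c d : α} (hab : a ≠ b) (hcd : c ≠ d) :
    ∃ π : Perm α, π a = c ∧ π b = d := by
  refine ⟨swap (swap a c b) d * swap a c, ?_, by simp⟩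
  have hcb : c ≠ swap a c b := fun h => hab ((swap a c).injective (by rwa [swap_apply_left]))
  simp [swap_apply_of_ne_of_ne hcb hcd]

lemma add_comp_threeCycle_eq_single_add_single {v : α → ZMod 2} {i j k : α} (hij : i ≠ j)
    (hik : i ≠ k) (hjk : j ≠ k) (hv : v i ≠ v j) (hkj : v k = v j) :
    v + (fun x => v ((swap i k * swap i j)⁻¹ x)) = Pi.single i 1 + Pi.single j 1 := by
  have h1 := ZMod.add_eq_one_of_ne_mod_two hv
  funext x
  simp only [Pi.add_apply, Pi.single_apply, mul_inv_rev, swap_inv, Perm.mul_apply]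
  rcases eq_or_ne x i with rfl | hxi
  · simp [swap_apply_of_ne_of_ne hik.symm hjk.symm, hij, hkj, h1]
  rcases eq_or_ne x j with rfl | hxj
  · simp [swap_apply_of_ne_of_ne hxi hjk, hxi, add_comm, h1]
  rcases eq_or_ne x k with rfl | hxk
  · simp [hxi, hxj, hkj, CharTwo.add_self_eq_zero]
  · simp [hxi, hxj, hxk, swap_apply_of_ne_of_ne, CharTwo.add_self_eq_zero]

variable [Fintype α]

-- Composing with `swap c d` fixes the pair `{c, d}` and corrects the sign.
lemma exists_mem_alternatingGroup_apply_eq_pair {a b c d : α} (hab : a ≠ b) (hcd : c ≠ d) :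
    ∃ σ ∈ alternatingGroup α, (σ a = c ∧ σ b = d) ∨ (σ a = d ∧ σ b = c) := by
  obtain ⟨π, hπa, hπb⟩ := exists_perm_apply_eq_and_apply_eq hab hcd
  rcases Int.units_eq_one_or (Perm.sign π) with hs | hs
  · exact ⟨π, Perm.mem_alternatingGroup.mpr hs, .inl ⟨hπa, hπb⟩⟩
  · refine ⟨swap c d * π, ?_, .inr ⟨by simp [hπa], by simp [hπb]⟩⟩
    rw [Perm.mem_alternatingGroup, map_mul, hs, Perm.sign_swap hcd]
    rfl

variable {W : AddSubgroup (α → ZMod 2)}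

lemma single_add_single_mem_of_mem
    (hW : ∀ σ ∈ alternatingGroup α, ∀ v ∈ W, (fun i => v (σ⁻¹ i)) ∈ W)
    {a b : α} (hab : a ≠ b) (h : Pi.single a 1 + Pi.single b 1 ∈ W) (c d : α) :
    Pi.single c 1 + Pi.single d 1 ∈ W := by
  rcases eq_or_ne c d with rfl | hcd
  · rw [← Pi.single_add, CharTwo.add_self_eq_zero, Pi.single_zero]
    exact W.zero_mem
  obtain ⟨σ, hσ, hσab⟩ := exists_mem_alternatingGroup_apply_eq_pair hab hcd
  have hmem := hW σ hσ _ h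
  rw [single_add_single_comp_perm_inv] at hmem
  rcases hσab with ⟨rfl, rfl⟩ | ⟨rfl, rfl⟩
  · exact hmem
  · rwa [add_comm]

lemma exists_single_add_single_mem
    (hW : ∀ σ ∈ alternatingGroup α, ∀ v ∈ W, (fun i => v (σ⁻¹ i)) ∈ W)
    (hα : 3 ≤ Fintype.card α) {v : α → ZMod 2} (hv : v ∈ W) {i j : α}
    (hij : v i ≠ v j) : ∃ a b, a ≠ b ∧ Pi.single a 1 + Pi.single b 1 ∈ W := by
  obtain ⟨k, -, hk⟩ := Finset.exists_mem_notMem_of_card_lt_card (s := {i, j})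
    (t := Finset.univ) (by rw [Finset.card_univ]; exact Finset.card_le_two.trans_lt hα)
  simp only [Finset.mem_insert, Finset.mem_singleton, not_or] at hk
  have of_three_cycle {i j : α} (hij : v i ≠ v j) (hki : k ≠ i) (hkj : k ≠ j)
      (hvk : v k = v j) : ∃ a b, a ≠ b ∧ Pi.single a 1 + Pi.single b 1 ∈ W := by
    have hne : i ≠ j := ne_of_apply_ne v hij
    have hc := (Perm.isThreeCycle_swap_mul_swap_same hki.symm hne hkj).mem_alternatingGroup
    refine ⟨i, j, hne, ?_⟩
    rw [← add_comp_threeCycle_eq_single_add_single hne hki.symm hkj.symm hij hvk]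
    exact W.add_mem hv (hW _ hc v hv)
  by_cases hkj : v k = v j
  · exact of_three_cycle hij hk.1 hk.2 hkj
  · have hki : v k = v i :=
      add_right_cancel ((ZMod.add_eq_one_of_ne_mod_two hkj).trans
        (ZMod.add_eq_one_of_ne_mod_two hij).symm)
    exact of_three_cycle hij.symm hk.2 hk.1 hki

end Action

section FinVectors

variable {n : ℕ} {W : AddSubgroup (Fin n → ZMod 2)}

lemma mem_deltaAdd_iff {v : Fin n → ZMod 2} : v ∈ DeltaAdd n ↔ v = 0 ∨ v = 1 := by
  refine ⟨fun hv => or_iff_not_imp_left.mpr fun hv0 => ?_, ?_⟩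
  · obtain ⟨i, hi⟩ : ∃ i, v i ≠ 0 := by simpa [funext_iff] using hv0
    funext j
    rw [hv j i]
    simpa using ZMod.add_eq_one_of_ne_mod_two hi
  · rintro (rfl | rfl) <;> exact fun _ _ => rfl

lemma eq_deltaAdd_of_le (h : W ≤ DeltaAdd n) (hW : W ≠ ⊥) : W = DeltaAdd n := by
  obtain ⟨v, hv, hv0⟩ := W.bot_or_exists_ne_zero.resolve_left hW
  have hv1 : v = 1 := (mem_deltaAdd_iff.mp (h hv)).resolve_left hv0
  refine le_antisymm h fun w hw => ?_
  rcases mem_deltaAdd_iff.mp hw with rfl | rfl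
  exacts [W.zero_mem, hv1 ▸ hv]

lemma veAdd_le_of_single_add_single_mem (h : ∀ a b : Fin n, Pi.single a 1 + Pi.single b 1 ∈ W) :
    VeAdd n ≤ W := by
  intro u hu
  rcases isEmpty_or_nonempty (Fin n) with _ | ⟨⟨z⟩⟩
  · rw [Subsingleton.elim u 0]
    exact W.zero_mem
  have hu' : u = ∑ x, u x • (Pi.single x 1 + Pi.single z 1) := by
    rw [Finset.sum_congr rfl fun x _ => smul_add (u x) _ _, Finset.sum_add_distrib,
      ← Finset.sum_smul, show ∑ x, u x = 0 from hu, zero_smul, add_zero]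
    exact pi_eq_sum_univ' u
  rw [hu']
  exact (W.toZModSubmodule 2).sum_mem fun x _ => Submodule.smul_mem _ _ (h x z)

lemma eq_veAdd_of_veAdd_le (h : VeAdd n ≤ W) (hW : W ≠ ⊤) : W = VeAdd n := by
  refine le_antisymm (fun w hw => ?_) h
  by_contra hw'
  refine hW (eq_top_iff.mpr fun u _ => ?_)
  by_cases hu : u ∈ VeAdd n
  · exact h hu
  rw [← W.add_mem_cancel_right hw]
  apply h
  change ∑ x, (u x + w x) = 0
  have hu1 : ∑ x, u x = 1 := by simpa using ZMod.add_eq_one_of_ne_mod_two hu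
  have hw1 : ∑ x, w x = 1 := by simpa using ZMod.add_eq_one_of_ne_mod_two hw'
  rw [Finset.sum_add_distrib, hu1, hw1]
  rfl

end FinVectors

/-- Let `n ≥ 3` and let `H` be a subgroup of `Sₙ` containing the alternating group `Aₙ`.
If `W` is an `H`-invariant additive subgroup of `V = (Fin n → ZMod 2)` (for the
coordinate-permutation action) with `W ≠ 0` and `W ≠ V`, then `W = Δ` (the subgroup of
constant vectors) or `W = Vₑ` (the subgroup of vectors with coordinate sum zero). -/
theorem invariant_subgroups_of_V (n : ℕ) (hn : 3 ≤ n)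
    (H : Subgroup (Equiv.Perm (Fin n))) (hH : alternatingGroup (Fin n) ≤ H)
    (W : AddSubgroup (Fin n → ZMod 2))
    (hinv : ∀ σ ∈ H, ∀ v ∈ W, (fun i => v (σ⁻¹ i)) ∈ W)
    (hW0 : W ≠ ⊥) (hWV : W ≠ ⊤) :
    W = DeltaAdd n ∨ W = VeAdd n := by
  by_cases hΔ : W ≤ DeltaAdd n
  · exact .inl (eq_deltaAdd_of_le hΔ hW0)
  obtain ⟨v, hv, hvΔ⟩ := SetLike.not_le_iff_exists.mp hΔ
  obtain ⟨i, j, hij⟩ : ∃ i j, v i ≠ v j := by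
    by_contra! hconst
    exact hvΔ hconst
  have hA : ∀ σ ∈ alternatingGroup (Fin n), ∀ v ∈ W, (fun i => v (σ⁻¹ i)) ∈ W :=
    fun σ hσ => hinv σ (hH hσ)
  obtain ⟨a, b, hab, habW⟩ := exists_single_add_single_mem hA (by rwa [Fintype.card_fin]) hv hij
  have hVe : VeAdd n ≤ W :=
    veAdd_le_of_single_add_single_mem (single_add_single_mem_of_mem hA hab habW)
  exact .inr (eq_veAdd_of_veAdd_le hVe hWV)
end

section
/- Let n = 3 or n ≥ 5. A subgroup N of the Weyl group W(Dₙ) = Vₑ ⋊ Sₙ is a nontrivial proper normal subgroup if and only if N equals Vₑ (identified with the subgroup of pairs (v,1)), or N equals Vₑ ⋊ Aₙ, or n is even and N equals Δ (the order-2 subgroup of constant vectors, which lies in Vₑ exactly when n is even). -/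
open Multiplicative

/-- The subgroup `Δ` of constant vectors in `V`. -/
def Delta (n : ℕ) : Subgroup (Vn n) where
  carrier := {v | ∀ i j, toAdd v i = toAdd v j}
  one_mem' := fun _ _ => rfl
  mul_mem' := fun {a b} ha hb i j => by
    simp only [toAdd_mul, Pi.add_apply]; rw [ha i j, hb i j]
  inv_mem' := fun {a} ha i j => by
    simp only [toAdd_inv, Pi.neg_apply]; rw [ha i j]

/-- `Vₑ` viewed as the subgroup of pairs `(v, 1)` inside `W(Dₙ)`. -/
def VeInWD (n : ℕ) : Subgroup (WD n) :=
  (SemidirectProduct.inl : ↥(Ve n) →* WD n).range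

/-- The subgroup `Vₑ ⋊ Aₙ` of `W(Dₙ)`, consisting of the pairs `(v, σ)` with `σ ∈ Aₙ`. -/
def VeAltInWD (n : ℕ) : Subgroup (WD n) :=
  Subgroup.comap (SemidirectProduct.rightHom : WD n →* Equiv.Perm (Fin n))
    (alternatingGroup (Fin n))

/-- `Δ` viewed as a subgroup of `W(Dₙ)` (pairs `(v, 1)` with `v` a constant vector;
note constant vectors lie in `Vₑ` exactly when `n` is even). -/
def DeltaInWD (n : ℕ) : Subgroup (WD n) :=
  Subgroup.map (SemidirectProduct.inl : ↥(Ve n) →* WD n)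
    ((Delta n).comap (Ve n).subtype)

/-!
Let `M = N ∩ Vₑ` and let `P` be the image of `N` in `Sₙ`. Since `Vₑ` is abelian, `M` is
`Sₙ`-invariant. If some `v ∈ M` has `v p ≠ v q`, then `M` contains `v + (p q)·v = e_p + e_q`,
hence every `e_p + e_i`, and these generate `Vₑ`; otherwise `M ≤ Δ`.
If `P = 1` then `N = M`, and a nontrivial `M ≤ Δ` is `Δ` itself, which lies in `Vₑ` only for
even `n`. If `P ≠ 1`, then `P ⊇ Aₙ` (for `n = 3` because some commutator with a nontrivial
element is a 3-cycle, for `n ≥ 5` by the simplicity of `Aₙ`). Lifting the 3-cycle `(a b)(a c)`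
to `g ∈ N`, the commutator of `e_a + e_c` with `g` is `e_a + e_b`, so `M = Vₑ` and `N` is the
preimage of `P ∈ {Aₙ, Sₙ}`.
-/

open Equiv Equiv.Perm SemidirectProduct

namespace Equiv.Perm

variable {α : Type*} [Fintype α] [DecidableEq α]

theorem alternatingGroup_le_of_isThreeCycle_mem {P : Subgroup (Perm α)} [hP : P.Normal]
    {t : Perm α} (ht : t.IsThreeCycle) (htP : t ∈ P) : alternatingGroup α ≤ P := by
  rw [← closure_three_cycles_eq_alternating, Subgroup.closure_le]
  intro g (hg : g.IsThreeCycle)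
  obtain ⟨c, rfl⟩ := isConj_iff.1 (isConj_iff_cycleType_eq.2 (ht.trans hg.symm))
  exact hP.conj_mem t htP c

theorem exists_isThreeCycle_commutator_of_ne_one {σ : Perm (Fin 3)} (hσ : σ ≠ 1) :
    ∃ τ : Perm (Fin 3), (τ * σ * τ⁻¹ * σ⁻¹).IsThreeCycle := by
  simp_rw [← card_support_eq_three_iff]
  revert σ
  decide

theorem alternatingGroup_fin_le_of_normal {n : ℕ} (hn : n = 3 ∨ 5 ≤ n)
    {P : Subgroup (Perm (Fin n))} [hP : P.Normal] (hP_ne : P ≠ ⊥) :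
    alternatingGroup (Fin n) ≤ P := by
  rcases hn with rfl | hn
  · obtain ⟨⟨σ, hσP⟩, hσ⟩ := Subgroup.ne_bot_iff_exists_ne_one.1 hP_ne
    obtain ⟨τ, hτ⟩ := exists_isThreeCycle_commutator_of_ne_one (σ := σ) (by simpa using hσ)
    exact alternatingGroup_le_of_isThreeCycle_mem hτ
      (mul_mem (hP.conj_mem σ hσP τ) (inv_mem hσP))
  · exact alternatingGroup_le_of_normal (by simpa) ((Subgroup.nontrivial_iff_ne_bot P).2 hP_ne)

theorem eq_alternatingGroup_or_eq_top_of_le [Nontrivial α] {P : Subgroup (Perm α)}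
    (h : alternatingGroup α ≤ P) : P = alternatingGroup α ∨ P = ⊤ := by
  have hdvd := Subgroup.index_dvd_of_le h
  rw [alternatingGroup.index_eq_two, Nat.dvd_prime Nat.prime_two, Subgroup.index_eq_one] at hdvd
  exact hdvd.symm.imp_left eq_alternatingGroup_of_index_eq_two

end Equiv.Perm

namespace SemidirectProduct

section

variable {N G : Type*} [Group N] [Group G] {φ : G →* MulAut N}

theorem aut_mem_comap_inl {H : Subgroup (N ⋊[φ] G)} [hH : H.Normal] (g : G) {x : N}
    (hx : x ∈ H.comap inl) : φ g x ∈ H.comap inl := by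
  rw [Subgroup.mem_comap, inl_aut, map_inv]
  exact hH.conj_mem _ hx _

end

section Comm

variable {N G : Type*} [CommGroup N] [Group G] {φ : G →* MulAut N}

theorem mul_inl_mul_inv (g : N ⋊[φ] G) (x : N) : g * inl x * g⁻¹ = inl (φ g.right x) := by
  ext <;> simp [mul_comm]

theorem inl_mul_aut_inv_mem {H : Subgroup (N ⋊[φ] G)} [hH : H.Normal] {g : N ⋊[φ] G}
    (hg : g ∈ H) (x : N) : inl (x * (φ g.right x)⁻¹) ∈ H := by
  have hcomm : inl x * g * (inl x)⁻¹ * g⁻¹ ∈ H := mul_mem (hH.conj_mem g hg _) (inv_mem hg)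
  rwa [mul_assoc, mul_assoc, ← mul_assoc g, ← map_inv, mul_inl_mul_inv, ← map_mul, map_inv]
    at hcomm

theorem map_inl_normal {M : Subgroup N} (hM : ∀ g, ∀ x ∈ M, φ g x ∈ M) :
    (M.map (inl : N →* N ⋊[φ] G)).Normal :=
  ⟨by
    rintro _ ⟨x, hx, rfl⟩ g
    exact ⟨_, hM _ _ hx, (mul_inl_mul_inv g x).symm⟩⟩

end Comm

end SemidirectProduct

section EvenVectors

variable {n : ℕ}

theorem Ve_ext {v w : Ve n} (h : ∀ i, toAdd (v : Vn n) i = toAdd (w : Vn n) i) : v = w :=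
  Subtype.ext (toAdd.injective (funext h))

@[simp] theorem toAdd_coe_permAutVe (σ : Perm (Fin n)) (v : Ve n) :
    toAdd (permAutVe n σ v : Vn n) = fun i => toAdd (v : Vn n) (σ⁻¹ i) := rfl

def pairVe (n : ℕ) (a b : Fin n) : Ve n :=
  ⟨ofAdd (Pi.single a 1 + Pi.single b 1), by
    change ∑ i, (Pi.single a 1 + Pi.single b 1 : Fin n → ZMod 2) i = 0
    simp [Finset.sum_add_distrib, CharTwo.add_self_eq_zero]⟩

@[simp] theorem toAdd_coe_pairVe (a b : Fin n) :
    toAdd (pairVe n a b : Vn n) = Pi.single a 1 + Pi.single b 1 := rfl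

theorem pairVe_self (a : Fin n) : pairVe n a a = 1 :=
  Ve_ext fun i => by simp [CharTwo.add_self_eq_zero]

theorem pairVe_inv (a b : Fin n) : (pairVe n a b)⁻¹ = pairVe n a b :=
  Ve_ext fun i => by simp [CharTwo.neg_eq]

theorem pairVe_mul_pairVe (a b c : Fin n) : pairVe n a b * pairVe n b c = pairVe n a c :=
  Ve_ext fun i => by
    simp only [Subgroup.coe_mul, toAdd_mul, toAdd_coe_pairVe, Pi.add_apply]
    rw [add_assoc, ← add_assoc (Pi.single b 1 i), CharTwo.add_self_eq_zero, zero_add]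

theorem permAutVe_pairVe (σ : Perm (Fin n)) (a b : Fin n) :
    permAutVe n σ (pairVe n a b) = pairVe n (σ a) (σ b) :=
  Ve_ext fun i => by simp [Pi.single_apply, Equiv.symm_apply_eq]

theorem pairVe_ne_one {a b : Fin n} (hab : a ≠ b) : pairVe n a b ≠ 1 := fun h => by
  simpa [hab] using congrArg (fun v : Ve n => toAdd (v : Vn n) a) h

theorem eq_prod_pairVe_pow (p : Fin n) (v : Ve n) :
    v = ∏ i, pairVe n p i ^ (toAdd (v : Vn n) i).val := by
  have hv : ∑ i, toAdd (v : Vn n) i = 0 := v.2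
  refine Ve_ext fun j => ?_
  simp only [Subgroup.val_finsetProd, Subgroup.coe_pow, toAdd_prod, toAdd_pow, toAdd_coe_pairVe,
    Finset.sum_apply, Pi.smul_apply, Pi.add_apply]
  simp only [nsmul_eq_mul, ZMod.natCast_zmod_val, mul_add, Finset.sum_add_distrib,
    ← Finset.sum_mul, hv, zero_mul, zero_add]
  simp [Pi.single_apply]

theorem eq_top_of_forall_pairVe_mem {M : Subgroup (Ve n)} {p : Fin n}
    (h : ∀ i, pairVe n p i ∈ M) : M = ⊤ :=
  eq_top_iff.2 fun v _ => (eq_prod_pairVe_pow p v).symm ▸ prod_mem fun i _ => pow_mem (h i) _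

theorem mul_permAutVe_swap_eq_pairVe {v : Ve n} {p q : Fin n}
    (hpq : toAdd (v : Vn n) p ≠ toAdd (v : Vn n) q) :
    v * permAutVe n (swap p q) v = pairVe n p q := by
  have h2 : ∀ x y : ZMod 2, x ≠ y → x + y = 1 := by decide
  have hne : p ≠ q := ne_of_apply_ne _ hpq
  refine Ve_ext fun m => ?_
  rcases eq_or_ne m p with rfl | hmp
  · simp [hne, h2 _ _ hpq]
  rcases eq_or_ne m q with rfl | hmq
  · simp [hmp, add_comm, h2 _ _ hpq]
  · simp [hmp, hmq, swap_apply_of_ne_of_ne, CharTwo.add_self_eq_zero]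

def DeltaVe (n : ℕ) : Subgroup (Ve n) := (Delta n).comap (Ve n).subtype

theorem mem_DeltaVe_iff {v : Ve n} :
    v ∈ DeltaVe n ↔ ∀ i j, toAdd (v : Vn n) i = toAdd (v : Vn n) j := Iff.rfl

theorem permAutVe_mem_DeltaVe (σ : Perm (Fin n)) {v : Ve n} (hv : v ∈ DeltaVe n) :
    permAutVe n σ v ∈ DeltaVe n :=
  fun _ _ => hv _ _

theorem mem_Delta_iff {v : Vn n} : v ∈ Delta n ↔ v = 1 ∨ v = ofAdd 1 := by
  have h01 : ∀ x : ZMod 2, x ≠ 1 → x = 0 := by decide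
  refine ⟨fun hv => ?_, by rintro (rfl | rfl) <;> exact fun _ _ => rfl⟩
  by_cases h : ∃ i, toAdd v i = 1
  · obtain ⟨i, hi⟩ := h
    exact Or.inr (toAdd.injective (funext fun j => (hv j i).trans hi))
  · simp only [not_exists] at h
    exact Or.inl (toAdd.injective (funext fun j => h01 _ (h j)))

theorem ofAdd_one_mem_Ve_iff : (ofAdd 1 : Vn n) ∈ Ve n ↔ Even n := by
  change ∑ _ : Fin n, (1 : ZMod 2) = 0 ↔ _
  simp [ZMod.natCast_eq_zero_iff_even]

theorem even_and_eq_DeltaVe_of_le {M : Subgroup (Ve n)} (hle : M ≤ DeltaVe n) (hM : M ≠ ⊥) :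
    Even n ∧ M = DeltaVe n := by
  obtain ⟨⟨w, hwM⟩, hw⟩ := Subgroup.ne_bot_iff_exists_ne_one.1 hM
  have hw_ones : (w : Vn n) = ofAdd 1 :=
    (mem_Delta_iff.1 (hle hwM)).resolve_left (by simpa using hw)
  refine ⟨ofAdd_one_mem_Ve_iff.1 (hw_ones ▸ w.2), le_antisymm hle fun v hv => ?_⟩
  rcases mem_Delta_iff.1 hv with hv1 | hv1
  · rw [show v = 1 from Subtype.ext hv1]
    exact one_mem M
  · rwa [show v = w from Subtype.ext (hv1.trans hw_ones.symm)]

theorem DeltaVe_ne_bot (heven : Even n) (hn : n ≠ 0) : DeltaVe n ≠ ⊥ := by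
  refine Subgroup.ne_bot_iff_exists_ne_one.2
    ⟨⟨⟨ofAdd 1, ofAdd_one_mem_Ve_iff.2 heven⟩, fun _ _ => rfl⟩, fun h => ?_⟩
  have := congrArg (fun v : DeltaVe n => toAdd ((v : Ve n) : Vn n) ⟨0, Nat.pos_of_ne_zero hn⟩) h
  simp at this

variable {M : Subgroup (Ve n)}

theorem pairVe_mem_of_pairVe_mem (hM : ∀ σ : Perm (Fin n), ∀ v ∈ M, permAutVe n σ v ∈ M)
    {p q : Fin n} (hpq : p ≠ q) (h : pairVe n p q ∈ M) (c : Fin n) : pairVe n p c ∈ M := by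
  rcases eq_or_ne c p with rfl | hcp
  · rw [pairVe_self]
    exact one_mem M
  · simpa [permAutVe_pairVe, swap_apply_of_ne_of_ne hpq hcp.symm] using hM (swap q c) _ h

theorem eq_top_of_pairVe_mem (hM : ∀ σ : Perm (Fin n), ∀ v ∈ M, permAutVe n σ v ∈ M)
    {p q : Fin n} (hpq : p ≠ q) (h : pairVe n p q ∈ M) : M = ⊤ :=
  eq_top_of_forall_pairVe_mem (pairVe_mem_of_pairVe_mem hM hpq h)

theorem eq_top_or_le_DeltaVe (hM : ∀ σ : Perm (Fin n), ∀ v ∈ M, permAutVe n σ v ∈ M) :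
    M = ⊤ ∨ M ≤ DeltaVe n := by
  refine or_iff_not_imp_right.2 fun h => ?_
  obtain ⟨v, hvM, hv⟩ := Set.not_subset.1 h
  simp only [SetLike.mem_coe, mem_DeltaVe_iff, not_forall] at hv
  obtain ⟨p, q, hpq⟩ := hv
  refine eq_top_of_pairVe_mem hM (ne_of_apply_ne _ hpq) ?_
  rw [← mul_permAutVe_swap_eq_pairVe hpq]
  exact mul_mem hvM (hM _ _ hvM)

end EvenVectors

section WeylD

variable {n : ℕ}

theorem VeInWD_le_of_alternatingGroup_le (hn : 3 ≤ n) {N : Subgroup (WD n)} [N.Normal]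
    (hA : alternatingGroup (Fin n) ≤ N.map rightHom) : VeInWD n ≤ N := by
  obtain ⟨a, b, c, hab, hac, hbc⟩ : ∃ a b c : Fin n, a ≠ b ∧ a ≠ c ∧ b ≠ c :=
    ⟨⟨0, by omega⟩, ⟨1, by omega⟩, ⟨2, by omega⟩, by simp [Fin.ext_iff]⟩
  obtain ⟨g, hg, hgt⟩ := hA (isThreeCycle_swap_mul_swap_same hab hac hbc).mem_alternatingGroup
  have hpair : pairVe n a b ∈ N.comap inl := by
    have h := inl_mul_aut_inv_mem hg (pairVe n a c)
    rw [← rightHom_eq_right, hgt, permAutVe_pairVe, pairVe_inv] at h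
    simpa [swap_apply_of_ne_of_ne hac.symm hbc.symm, pairVe_mul_pairVe] using h
  rw [VeInWD, MonoidHom.range_eq_map, Subgroup.map_le_iff_le_comap, top_le_iff]
  exact eq_top_of_pairVe_mem (fun σ _ hv => aut_mem_comap_inl σ hv) hab hpair

theorem eq_VeInWD_or_eq_DeltaInWD {N : Subgroup (WD n)} [N.Normal] (hbot : N ≠ ⊥)
    (hle : N ≤ VeInWD n) : N = VeInWD n ∨ (Even n ∧ N = DeltaInWD n) := by
  have hN_eq : (N.comap inl).map inl = N := Subgroup.map_comap_eq_self hle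
  have hM_ne : N.comap inl ≠ ⊥ := fun h => hbot (by rw [← hN_eq, h, Subgroup.map_bot])
  rcases eq_top_or_le_DeltaVe (M := N.comap inl) fun σ _ hv => aut_mem_comap_inl σ hv with
    hM | hM
  · exact Or.inl (by rw [← hN_eq, hM, ← MonoidHom.range_eq_map]; rfl)
  · obtain ⟨heven, hM⟩ := even_and_eq_DeltaVe_of_le hM hM_ne
    exact Or.inr ⟨heven, by rw [← hN_eq, hM]; rfl⟩

theorem eq_VeAltInWD_or_eq_top (hn : n = 3 ∨ 5 ≤ n) {N : Subgroup (WD n)} [hN : N.Normal]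
    (hle : ¬N ≤ VeInWD n) : N = VeAltInWD n ∨ N = ⊤ := by
  have : Nontrivial (Fin n) := Fin.nontrivial_iff_two_le.2 (by omega)
  have := hN.map _ rightHom_surjective
  have hA := alternatingGroup_fin_le_of_normal hn (P := N.map rightHom)
    (by rwa [Ne, Subgroup.map_eq_bot_iff, ← range_inl_eq_ker_rightHom])
  have hN_eq : (N.map rightHom).comap rightHom = N := by
    rw [Subgroup.comap_map_eq, ← range_inl_eq_ker_rightHom]
    exact sup_eq_left.2 (VeInWD_le_of_alternatingGroup_le (by omega) hA)
  rcases eq_alternatingGroup_or_eq_top_of_le hA with hP | hP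
  · exact Or.inl (by rw [← hN_eq, hP]; rfl)
  · exact Or.inr (by rw [← hN_eq, hP, Subgroup.comap_top])

theorem VeInWD_normal : (VeInWD n).Normal := by
  rw [VeInWD, range_inl_eq_ker_rightHom]
  exact MonoidHom.normal_ker _

theorem VeInWD_ne_bot [Nontrivial (Fin n)] : VeInWD n ≠ ⊥ := fun h => by
  obtain ⟨a, b, hab⟩ := exists_pair_ne (Fin n)
  have hmem : inl (pairVe n a b) ∈ VeInWD n := ⟨_, rfl⟩
  rw [h, Subgroup.mem_bot, map_eq_one_iff _ inl_injective] at hmem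
  exact pairVe_ne_one hab hmem

theorem VeInWD_le_VeAltInWD : VeInWD n ≤ VeAltInWD n := by
  rintro _ ⟨v, rfl⟩
  simp [VeAltInWD, one_mem]

theorem VeAltInWD_ne_top [Nontrivial (Fin n)] : VeAltInWD n ≠ ⊤ := fun h => by
  obtain ⟨a, b, hab⟩ := exists_pair_ne (Fin n)
  have hswap : inr (swap a b) ∈ VeAltInWD n := h ▸ Subgroup.mem_top _
  simp [VeAltInWD, Equiv.Perm.mem_alternatingGroup, sign_swap hab] at hswap

theorem DeltaInWD_le_VeInWD : DeltaInWD n ≤ VeInWD n :=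
  Subgroup.map_le_range _ _

theorem DeltaInWD_normal : (DeltaInWD n).Normal :=
  map_inl_normal fun σ _ hv => permAutVe_mem_DeltaVe σ hv

theorem DeltaInWD_ne_bot (heven : Even n) (hn : n ≠ 0) : DeltaInWD n ≠ ⊥ :=
  (Subgroup.map_eq_bot_iff_of_injective _ inl_injective).not.2 (DeltaVe_ne_bot heven hn)

end WeylD

/-- Let `n = 3` or `n ≥ 5`. A subgroup `N` of the Weyl group `W(Dₙ) = Vₑ ⋊ Sₙ` is a
nontrivial proper normal subgroup if and only if `N = Vₑ` (identified with the pairs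
`(v,1)`), or `N = Vₑ ⋊ Aₙ`, or `n` is even and `N = Δ`. -/
theorem normal_subgroups_of_WD (n : ℕ) (hn : n = 3 ∨ 5 ≤ n) (N : Subgroup (WD n)) :
    (N.Normal ∧ N ≠ ⊥ ∧ N ≠ ⊤) ↔
      (N = VeInWD n ∨ N = VeAltInWD n ∨ (Even n ∧ N = DeltaInWD n)) := by
  have : Nontrivial (Fin n) := Fin.nontrivial_iff_two_le.2 (by omega)
  have hVeAlt_ne_top : VeAltInWD n ≠ ⊤ := VeAltInWD_ne_top
  constructor
  · rintro ⟨hN, hbot, htop⟩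
    by_cases hle : N ≤ VeInWD n
    · exact (eq_VeInWD_or_eq_DeltaInWD hbot hle).imp_right Or.inr
    · exact Or.inr (Or.inl ((eq_VeAltInWD_or_eq_top hn hle).resolve_right htop))
  · rintro (rfl | rfl | ⟨heven, rfl⟩)
    · exact ⟨VeInWD_normal, VeInWD_ne_bot,
        ne_top_of_le_ne_top hVeAlt_ne_top VeInWD_le_VeAltInWD⟩
    · exact ⟨(alternatingGroup.normal).comap _,
        ne_bot_of_le_ne_bot VeInWD_ne_bot VeInWD_le_VeAltInWD, hVeAlt_ne_top⟩
    · exact ⟨DeltaInWD_normal, DeltaInWD_ne_bot heven (by omega),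
        ne_top_of_le_ne_top hVeAlt_ne_top (DeltaInWD_le_VeInWD.trans VeInWD_le_VeAltInWD)⟩
end

section
/- Let U, U₁, …, U_r be finite groups with surjective homomorphisms pᵢ : U → Uᵢ such that the induced map U → ∏ᵢ Uᵢ is injective. Then there exist a field K with algebraic closure K̄ and intermediate fields L₁, …, L_r of K̄/K, each finite-dimensional and Galois over K, such that Gal(Lᵢ/K) is isomorphic to Uᵢ for each i, and the Galois group over K of the compositum L₁⋯L_r (the supremum of the Lᵢ as intermediate fields) is isomorphic to U. -/
/-- A realization of the groups `U, U₁, …, U_r` over a field `K`: intermediate fields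
`L₁, …, L_r` of an algebraic closure `K̄/K`, each finite and Galois over `K`, with
`Gal(Lᵢ/K) ≅ Uᵢ`, and with the Galois group of the compositum `L₁⋯L_r` isomorphic to
`U`. -/
structure GaloisRealization (r : ℕ) (U : Type) [Group U]
    (Ui : Fin r → Type) [∀ i, Group (Ui i)] : Type 1 where
  K : Type
  Kbar : Type
  [fieldK : Field K]
  [fieldKbar : Field Kbar]
  [alg : Algebra K Kbar]
  [isAlgClosure : IsAlgClosure K Kbar]
  L : Fin r → IntermediateField K Kbar
  finiteDimensional : ∀ i, FiniteDimensional K (L i)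
  isGalois : ∀ i, IsGalois K (L i)
  galIso : ∀ i, Nonempty ((↥(L i) ≃ₐ[K] ↥(L i)) ≃* Ui i)
  galCompositumIso :
    Nonempty ((↥(⨆ i, L i : IntermediateField K Kbar) ≃ₐ[K]
      ↥(⨆ i, L i : IntermediateField K Kbar)) ≃* U)

/-!
By Artin's theorem, `U` acting by permuting the variables of `M = ℚ(X_u : u ∈ U)` is the Galois
group of `M` over the invariant field `K`. Let `Lᵢ` be the fixed field of `ker pᵢ`. By the Galois
correspondence `Gal(Lᵢ/K) ≅ U ⧸ ker pᵢ ≅ Uᵢ`, and the compositum of the `Lᵢ` is the fixed field of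
`⋂ᵢ ker pᵢ = 1`, namely `M` itself; embedding `M` into `K̄` transports everything there.
-/

open IntermediateField

namespace MvPolynomial

variable (R σ : Type*) [CommSemiring R]

noncomputable def renameEquivHom : Equiv.Perm σ →* (MvPolynomial σ R ≃ₐ[R] MvPolynomial σ R) where
  toFun e := renameEquiv R e
  map_one' := renameEquiv_refl R
  map_mul' e f := (renameEquiv_trans R f e).symm

variable (G : Type*) [Group G] [MulAction G σ]

noncomputable abbrev renameMulSemiringAction : MulSemiringAction G (MvPolynomial σ R) :=
  MulSemiringAction.compHom _ ((renameEquivHom R σ).comp (MulAction.toPermHom G σ))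

theorem faithfulSMul_renameMulSemiringAction [Nontrivial R] [FaithfulSMul G σ] :
    letI := renameMulSemiringAction R σ G
    FaithfulSMul G (MvPolynomial σ R) :=
  let := renameMulSemiringAction R σ G
  ⟨fun h ↦ eq_of_smul_eq_smul fun s ↦ X_injective (R := R) (by
    have smul_X (g : G) : g • (X s : MvPolynomial σ R) = X (g • s) := rename_X _ _
    simpa only [smul_X] using h (X s))⟩

end MvPolynomial

namespace IsGalois

variable {K E : Type*} [Field K] [Field E] [Algebra K E] [FiniteDimensional K E] [IsGalois K E]

theorem iSup_fixedField {ι : Sort*} (H : ι → Subgroup Gal(E/K)) :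
    ⨆ i, fixedField (H i) = fixedField (⨅ i, H i) := by
  have := (intermediateFieldEquivSubgroup (F := K) (E := E)).symm.map_iSup
    (fun i ↦ OrderDual.toDual (H i))
  rw [← toDual_iInf] at this
  exact this.symm

noncomputable def autFixedFieldKerEquiv {Q : Type*} [Group Q] (φ : Gal(E/K) →* Q)
    (hφ : Function.Surjective φ) : Gal(fixedField φ.ker/K) ≃* Q :=
  (normalAutEquivQuotient φ.ker).symm.trans (QuotientGroup.quotientKerEquivOfSurjective φ hφ)

end IsGalois

theorem MonoidHom.iInf_ker_eq_bot {G ι : Type*} [Group G] {H : ι → Type*} [∀ i, Group (H i)]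
    (p : ∀ i, G →* H i) (hp : Function.Injective fun g i ↦ p i g) : ⨅ i, (p i).ker = ⊥ :=
  (Subgroup.eq_bot_iff_forall _).mpr fun g hg ↦
    hp (funext fun i ↦ by simpa using (Subgroup.mem_iInf.mp hg i))

namespace GaloisRealization

variable {r : ℕ} {U : Type} [Group U] {Ui : Fin r → Type} [∀ i, Group (Ui i)]

noncomputable def ofIsGalois {K M : Type} [Field K] [Field M] [Algebra K M]
    [FiniteDimensional K M] [IsGalois K M] (e : Gal(M/K) ≃* U) (p : ∀ i, U →* Ui i)
    (hsurj : ∀ i, Function.Surjective (p i)) (hinj : Function.Injective fun u i ↦ p i u) :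
    GaloisRealization r U Ui :=
  let φ i := (p i).comp e.toMonoidHom
  let F i := fixedField (φ i).ker
  let θ : M →ₐ[K] AlgebraicClosure K := IsAlgClosed.lift
  have hF : ⨆ i, F i = ⊤ := by
    rw [IsGalois.iSup_fixedField, MonoidHom.iInf_ker_eq_bot φ (hinj.comp e.injective),
      fixedField_bot]
  have hL : ⨆ i, (F i).map θ = θ.fieldRange := by
    rw [← IntermediateField.map_iSup, hF, ← AlgHom.fieldRange_eq_map]
  { K := K
    Kbar := AlgebraicClosure K
    L i := (F i).map θ
    finiteDimensional i := (equivMap (F i) θ).toLinearEquiv.finiteDimensional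
    isGalois i := IsGalois.of_algEquiv (equivMap (F i) θ)
    galIso i := ⟨(AlgEquiv.autCongr (equivMap (F i) θ)).symm.trans
      (IsGalois.autFixedFieldKerEquiv (φ i) ((hsurj i).comp e.surjective))⟩
    galCompositumIso := ⟨(AlgEquiv.autCongr ((AlgEquiv.ofInjectiveField θ).trans
      (equivOfEq hL).symm)).symm.trans e⟩ }

end GaloisRealization

theorem compositum_realizable_by_fields_general (r : ℕ) (U : Type) [Group U] [Finite U]
    (Ui : Fin r → Type) [∀ i, Group (Ui i)]
    (p : ∀ i, U →* Ui i) (hsurj : ∀ i, Function.Surjective (p i))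
    (hinj : Function.Injective (fun u i => p i u)) :
    Nonempty (GaloisRealization r U Ui) := by
  let F := FractionRing (MvPolynomial U ℚ)
  let := MvPolynomial.renameMulSemiringAction ℚ U U
  let := IsFractionRing.mulSemiringAction U (MvPolynomial U ℚ) F
  have := MvPolynomial.faithfulSMul_renameMulSemiringAction ℚ U U
  have := IsFractionRing.faithfulSMul U (MvPolynomial U ℚ) F
  exact ⟨.ofIsGalois (FixedPoints.toAlgAutMulEquiv U F).symm p hsurj hinj⟩

/-- Let `U, U₁, …, U_r` be finite groups with surjective homomorphisms `pᵢ : U → Uᵢ` such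
that the induced map `U → ∏ᵢ Uᵢ` is injective.  Then there exist a field `K` with algebraic
closure `K̄` and intermediate fields `L₁, …, L_r` of `K̄/K`, each finite-dimensional and
Galois over `K`, such that `Gal(Lᵢ/K) ≅ Uᵢ` for each `i`, and the Galois group over `K` of
the compositum `L₁⋯L_r` is isomorphic to `U`. -/
theorem compositum_realizable_by_fields (r : ℕ) (U : Type) [Group U] [Finite U]
    (Ui : Fin r → Type) [∀ i, Group (Ui i)] [∀ i, Finite (Ui i)]
    (p : ∀ i, U →* Ui i) (hsurj : ∀ i, Function.Surjective (p i))
    (hinj : Function.Injective (fun u i => p i u)) :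
    Nonempty (GaloisRealization r U Ui) :=
  compositum_realizable_by_fields_general r U Ui p hsurj hinj
end
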